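/- arXiv:1506.02972 — 5 statements merged into one kernel-verified Lean document; each statement's English description precedes it below -/
import Mathlib

section
/- For every integer n ≥ 2, a map f ∈ M(B_n) belongs to A^+(B_n) if and only if f is one of the following: (i) a constant map ξ_c for some c ∈ B_n; (ii) a singleton-support map ⟨(k,l),(p,q)⟩ for some k,l,p,q ∈ [n]; (iii) an n-support map (p,q;σ) for some p,q ∈ [n] and some permutation σ of [n]. -/
/-- The Brandt semigroup `B_n`: pairs from `Fin n × Fin n` together with a zero `ϑ = none`. -/
abbrev Brandt (n : ℕ) := Option (Fin n × Fin n)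

/-- Addition in the Brandt semigroup `B_n`. -/
def bAdd {n : ℕ} : Brandt n → Brandt n → Brandt n
  | some (i, j), some (k, l) => if j = k then some (i, l) else none
  | _, _ => none

/-- Pointwise addition on self-maps of `B_n`. -/
def padd {n : ℕ} (f g : Brandt n → Brandt n) : Brandt n → Brandt n :=
  fun x => bAdd (f x) (g x)

/-- Composition of self-maps of `B_n`, arguments written on the left: `x (f ∘ g) = (x f) g`. -/
def mcomp {n : ℕ} (f g : Brandt n → Brandt n) : Brandt n → Brandt n :=
  fun x => g (f x)

/-- The constant map `ξ_c`. -/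
def xi {n : ℕ} (c : Brandt n) : Brandt n → Brandt n := fun _ => c

/-- `f` is affine: `f = g + h` with `g` an endomorphism of `(B_n,+)` and `h` a constant map. -/
def IsAffine {n : ℕ} (f : Brandt n → Brandt n) : Prop :=
  ∃ (g : Brandt n → Brandt n) (c : Brandt n),
    (∀ a b, g (bAdd a b) = bAdd (g a) (g b)) ∧ f = padd g (xi c)

/-- Membership in `A⁺(B_n)`: the smallest subset of `M(B_n)` containing all affine maps and
closed under pointwise addition and composition. -/
inductive AP (n : ℕ) : (Brandt n → Brandt n) → Prop
  | base {f} : IsAffine f → AP n f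
  | add {f g} : AP n f → AP n g → AP n (padd f g)
  | comp {f g} : AP n f → AP n g → AP n (mcomp f g)

/-- The singleton-support map `⟨(k,l),(p,q)⟩` sending `(k,l)` to `(p,q)` and everything else to `ϑ`. -/
def sis {n : ℕ} (k l p q : Fin n) : Brandt n → Brandt n :=
  fun x => if x = some (k, l) then some (p, q) else none

/-- The `n`-support map `(p,q;σ)` sending `(i,p)` to `(iσ,q)` and everything else to `ϑ`. -/
def nsp {n : ℕ} (p q : Fin n) (σ : Equiv.Perm (Fin n)) : Brandt n → Brandt n
  | some (i, j) => if j = p then some (σ i, q) else none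
  | none => none

/-- Nonempty words over the alphabet `α` (the elements of the free semigroup `α⁺`). -/
def NEWord (α : Type*) := {l : List α // l ≠ []}

/-- Concatenation of nonempty words. -/
def neappend {α : Type*} (x y : NEWord α) : NEWord α :=
  ⟨x.1 ++ y.1, fun h => x.2 (List.append_eq_nil_iff.mp h).1⟩

/-- The syntactic congruence of `L ⊆ Σ⁺` on the free semigroup of nonempty words:
`x ≈_L y` iff `uxv ∈ L ↔ uyv ∈ L` for all nonempty words `u, v`. -/
def synSemiSetoid {α : Type*} (L : Set (List α)) : Setoid (NEWord α) where
  r x y := ∀ u v : List α, u ≠ [] → v ≠ [] → ((u ++ x.1 ++ v) ∈ L ↔ (u ++ y.1 ++ v) ∈ L)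
  iseqv := ⟨fun _ _ _ _ _ => Iff.rfl, fun h u v hu hv => (h u v hu hv).symm,
    fun h1 h2 u v hu hv => (h1 u v hu hv).trans (h2 u v hu hv)⟩

/-- The syntactic congruence of `L ⊆ Σ*` on the free monoid of all words:
`x ≈_L y` iff `uxv ∈ L ↔ uyv ∈ L` for all words `u, v`. -/
def synMonSetoid {α : Type*} (L : Set (List α)) : Setoid (List α) where
  r x y := ∀ u v : List α, ((u ++ x ++ v) ∈ L ↔ (u ++ y ++ v) ∈ L)
  iseqv := ⟨fun _ _ _ => Iff.rfl, fun h u v => (h u v).symm,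
    fun h1 h2 u v => (h1 u v).trans (h2 u v)⟩

/-- The sum `f + f + ⋯ + f` with `k+1` summands (the `(k+1)`-st additive power of `f`). -/
def addPow {n : ℕ} (f : Brandt n → Brandt n) : ℕ → (Brandt n → Brandt n)
  | 0 => f
  | k + 1 => padd (addPow f k) f

/-- The composite `f ∘ f ∘ ⋯ ∘ f` with `k+1` factors (the `(k+1)`-st compositional power of `f`). -/
def compPow {n : ℕ} (f : Brandt n → Brandt n) : ℕ → (Brandt n → Brandt n)
  | 0 => f
  | k + 1 => mcomp (compPow f k) f

/-- The word map `φ : Σ⁺ → A⁺(B_n)`, `φ(f₁ f₂ ⋯ f_k) = f₁ + f₂ + ⋯ + f_k` (junk value `ξ_ϑ` on `[]`). -/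
def phiW {n : ℕ} : List {f : Brandt n → Brandt n // IsAffine f} → (Brandt n → Brandt n)
  | [] => xi none
  | a :: t => List.foldl (fun acc s => padd acc s.val) a.val t

section AuxAP

variable {n : ℕ}

@[simp] theorem bAdd_none_left (a : Brandt n) : bAdd none a = none := rfl

@[simp] theorem bAdd_none_right (a : Brandt n) : bAdd a none = none := by
  rcases a with _ | ⟨i, j⟩ <;> rfl

@[simp] theorem bAdd_some_some (i j k l : Fin n) :
    bAdd (some (i, j)) (some (k, l)) = if j = k then some (i, l) else none := rfl

/-- The standard-form predicate. -/
abbrev Std (n : ℕ) (f : Brandt n → Brandt n) : Prop :=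
  (∃ c : Brandt n, f = xi c) ∨
    (∃ k l p q : Fin n, f = sis k l p q) ∨
    (∃ (p q : Fin n) (σ : Equiv.Perm (Fin n)), f = nsp p q σ)

theorem std_affine {f : Brandt n → Brandt n} (h : IsAffine f) : Std n f := by
  obtain ⟨g, c, hg, rfl⟩ := h
  rcases c with _ | ⟨u, v⟩
  · exact Or.inl ⟨none, funext fun x => bAdd_none_right _⟩
  rcases hθ : g none with _ | ⟨t, t'⟩
  · -- g ϑ = ϑ
    by_cases hz : ∀ i j : Fin n, g (some (i, j)) = none
    · refine Or.inl ⟨none, funext fun x => ?_⟩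
      rcases x with _ | ⟨i, j⟩
      · simp [padd, xi, hθ]
      · simp [padd, xi, hz i j]
    · push_neg at hz
      obtain ⟨i0, j0, h0⟩ := hz
      have hcol : ∀ i : Fin n, g (some (i, j0)) ≠ none := by
        intro i hni
        have h1 := hg (some (i0, i)) (some (i, j0))
        rw [show bAdd (some (i0, i)) (some (i, j0)) = some (i0, j0) by simp] at h1
        rw [hni, bAdd_none_right] at h1
        exact h0 h1
      have hall : ∀ i j : Fin n, ∃ y : Fin n × Fin n, g (some (i, j)) = some y := by
        intro i j
        refine Option.ne_none_iff_exists'.mp fun hni => ?_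
        have h1 := hg (some (i, j)) (some (j, j0))
        rw [show bAdd (some (i, j)) (some (j, j0)) = some (i, j0) by simp] at h1
        rw [hni, bAdd_none_left] at h1
        exact hcol i h1
      choose F hFs using fun p : Fin n × Fin n => hall p.1 p.2
      have hFs' : ∀ i j : Fin n, g (some (i, j)) = some (F (i, j)) := fun i j => hFs (i, j)
      have hrel : ∀ i j k : Fin n,
          (F (i, j)).2 = (F (j, k)).1 ∧ F (i, k) = ((F (i, j)).1, (F (j, k)).2) := by
        intro i j k
        have h1 := hg (some (i, j)) (some (j, k))
        rw [show bAdd (some (i, j)) (some (j, k)) = some (i, k) by simp,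
          hFs', hFs', hFs'] at h1
        rcases hab : F (i, j) with ⟨a, b⟩
        rcases hcd : F (j, k) with ⟨c, d⟩
        rw [hab, hcd, bAdd_some_some] at h1
        rcases eq_or_ne b c with rfl | hbc
        · rw [if_pos rfl] at h1
          refine ⟨rfl, ?_⟩
          simpa using h1
        · rw [if_neg hbc] at h1
          exact absurd h1 (by simp)
      set τ : Fin n → Fin n := fun i => (F (i, i)).1 with hτ
      have hFval : ∀ i j : Fin n, g (some (i, j)) = some (τ i, τ j) := by
        intro i j
        have h1 : (F (i, j)).1 = τ i := by rw [(hrel i i j).2]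
        have h2 : (F (i, j)).2 = τ j := (hrel i j j).1
        rw [hFs' i j, ← h1, ← h2]
      have hinj : Function.Injective τ := by
        intro i j hij
        by_contra hne
        have h1 := hg (some (i, j)) (some (i, j))
        rw [show bAdd (some (i, j)) (some (i, j)) = none by
            simp [Ne.symm hne], hθ, hFval, bAdd_some_some, if_pos hij.symm] at h1
        cases h1
      set σ : Equiv.Perm (Fin n) :=
        Equiv.ofBijective τ (Finite.injective_iff_bijective.mp hinj) with hσ
      have hσap : ∀ i, σ i = τ i := fun i => rfl
      refine Or.inr (Or.inr ⟨σ.symm u, v, σ, funext fun x => ?_⟩)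
      rcases x with _ | ⟨i, j⟩
      · simp [padd, xi, hθ, nsp]
      · simp only [padd, xi, hFval, nsp, bAdd_some_some, hσap]
        rcases eq_or_ne (τ j) u with hju | hju
        · rw [if_pos hju, if_pos (by rw [Equiv.eq_symm_apply, hσap, hju])]
        · rw [if_neg hju, if_neg (by rw [Equiv.eq_symm_apply, hσap]; exact hju)]
  · -- g ϑ is a nonzero idempotent, hence g is constant
    have h1 := hg none none
    rw [bAdd_none_left, hθ, bAdd_some_some] at h1
    have ht : t' = t := by
      by_contra hne; rw [if_neg hne] at h1; cases h1
    subst ht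
    have hconst : ∀ x : Brandt n, g x = some (t', t') := by
      intro x
      have h2 := hg none x
      rw [bAdd_none_left, hθ] at h2
      rcases hx : g x with _ | ⟨a, b⟩
      · rw [hx, bAdd_none_right] at h2; exact absurd h2 (by simp)
      · rw [hx, bAdd_some_some] at h2
        rcases eq_or_ne t' a with rfl | h3
        · rw [if_pos rfl] at h2
          exact h2.symm
        · rw [if_neg h3] at h2
          exact absurd h2 (by simp)
    exact Or.inl ⟨bAdd (some (t', t')) (some (u, v)),
      funext fun x => by simp [padd, xi, hconst x]⟩

theorem std_padd {f g : Brandt n → Brandt n} (hf : Std n f) (hg : Std n g) :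
    Std n (padd f g) := by
  rcases hf with ⟨a, rfl⟩ | ⟨k, l, p, q, rfl⟩ | ⟨p, q, σ, rfl⟩ <;>
    rcases hg with ⟨b, rfl⟩ | ⟨k', l', p', q', rfl⟩ | ⟨p', q', σ', rfl⟩
  -- ξ + ξ
  · exact Or.inl ⟨bAdd a b, rfl⟩
  -- ξ + sis
  · rcases a with _ | ⟨u, v⟩
    · exact Or.inl ⟨none, funext fun x => bAdd_none_left _⟩
    by_cases hv : v = p'
    · subst hv
      refine Or.inr (Or.inl ⟨k', l', u, q', funext fun x => ?_⟩)
      rcases x with _ | ⟨i, j⟩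
      · simp [padd, xi, sis]
      · simp only [padd, xi, sis]
        split_ifs <;> simp
    · refine Or.inl ⟨none, funext fun x => ?_⟩
      rcases x with _ | ⟨i, j⟩
      · simp [padd, xi, sis]
      · simp only [padd, xi, sis]
        split_ifs <;> simp [hv]
  -- ξ + nsp
  · rcases a with _ | ⟨u, v⟩
    · exact Or.inl ⟨none, funext fun x => bAdd_none_left _⟩
    refine Or.inr (Or.inl ⟨σ'.symm v, p', u, q', funext fun x => ?_⟩)
    rcases x with _ | ⟨i, j⟩
    · simp [padd, xi, nsp, sis]
    · simp only [padd, xi, nsp, sis]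
      by_cases hj : j = p'
      · subst hj
        rcases eq_or_ne (σ' i) v with hvi | hvi
        · rw [← hvi]
          simp [Equiv.symm_apply_apply]
        · have hi : i ≠ σ'.symm v := fun h => hvi (by rw [h, Equiv.apply_symm_apply])
          simp [Ne.symm hvi, hi]
      · simp [hj]
  -- sis + ξ
  · rcases b with _ | ⟨u, v⟩
    · exact Or.inl ⟨none, funext fun x => bAdd_none_right _⟩
    by_cases hq : q = u
    · subst hq
      refine Or.inr (Or.inl ⟨k, l, p, v, funext fun x => ?_⟩)
      rcases x with _ | ⟨i, j⟩
      · simp [padd, xi, sis]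
      · simp only [padd, xi, sis]
        split_ifs <;> simp
    · refine Or.inl ⟨none, funext fun x => ?_⟩
      rcases x with _ | ⟨i, j⟩
      · simp [padd, xi, sis]
      · simp only [padd, xi, sis]
        split_ifs <;> simp [hq]
  -- sis + sis
  · by_cases h : k = k' ∧ l = l' ∧ q = p'
    · obtain ⟨rfl, rfl, rfl⟩ := h
      refine Or.inr (Or.inl ⟨k, l, p, q', funext fun x => ?_⟩)
      rcases x with _ | ⟨i, j⟩
      · simp [padd, sis]
      · simp only [padd, sis]
        split_ifs <;> simp_all
    · refine Or.inl ⟨none, funext fun x => ?_⟩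
      rcases x with _ | ⟨i, j⟩
      · simp [padd, sis, xi]
      · simp only [padd, sis, xi]
        split_ifs <;> simp_all
  -- sis + nsp
  · by_cases h : l = p' ∧ q = σ' k
    · obtain ⟨rfl, hq⟩ := h
      refine Or.inr (Or.inl ⟨k, l, p, q', funext fun x => ?_⟩)
      rcases x with _ | ⟨i, j⟩
      · simp [padd, sis, nsp]
      · simp only [padd, sis, nsp]
        by_cases hx : some ((i, j) : Fin n × Fin n) = some (k, l)
        · obtain ⟨rfl, rfl⟩ : i = k ∧ j = l := by simpa using hx
          simp [hq]
        · by_cases hj : j = l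
          · subst hj
            simp [hx]
          · simp [hx, hj]
    · refine Or.inl ⟨none, funext fun x => ?_⟩
      rcases x with _ | ⟨i, j⟩
      · simp [padd, sis, nsp, xi]
      · simp only [padd, sis, nsp, xi]
        split_ifs <;> simp_all
  -- nsp + ξ
  · rcases b with _ | ⟨u, v⟩
    · exact Or.inl ⟨none, funext fun x => bAdd_none_right _⟩
    by_cases hq : q = u
    · subst hq
      refine Or.inr (Or.inr ⟨p, v, σ, funext fun x => ?_⟩)
      rcases x with _ | ⟨i, j⟩
      · simp [padd, xi, nsp]
      · simp only [padd, xi, nsp]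
        split_ifs <;> simp
    · refine Or.inl ⟨none, funext fun x => ?_⟩
      rcases x with _ | ⟨i, j⟩
      · simp [padd, xi, nsp]
      · simp only [padd, xi, nsp]
        split_ifs <;> simp [hq]
  -- nsp + sis
  · by_cases h : p = l' ∧ q = p'
    · obtain ⟨rfl, rfl⟩ := h
      refine Or.inr (Or.inl ⟨k', p, σ k', q', funext fun x => ?_⟩)
      rcases x with _ | ⟨i, j⟩
      · simp [padd, sis, nsp]
      · simp only [padd, sis, nsp]
        by_cases hj : j = p
        · subst hj
          rcases eq_or_ne i k' with rfl | hi
          · simp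
          · simp [hi]
        · simp [hj]
    · refine Or.inl ⟨none, funext fun x => ?_⟩
      rcases x with _ | ⟨i, j⟩
      · simp [padd, sis, nsp, xi]
      · simp only [padd, sis, nsp, xi]
        split_ifs <;> simp_all
  -- nsp + nsp
  · by_cases hp : p = p'
    · subst hp
      refine Or.inr (Or.inl ⟨σ'.symm q, p, σ (σ'.symm q), q', funext fun x => ?_⟩)
      rcases x with _ | ⟨i, j⟩
      · simp [padd, sis, nsp]
      · simp only [padd, sis, nsp]
        by_cases hj : j = p
        · subst hj
          rcases eq_or_ne i (σ'.symm q) with rfl | hi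
          · simp [Equiv.apply_symm_apply]
          · have h2 : σ' i ≠ q := fun h => hi (by rw [← h, Equiv.symm_apply_apply])
            simp [hi, Ne.symm h2]
        · simp [hj]
    · refine Or.inl ⟨none, funext fun x => ?_⟩
      rcases x with _ | ⟨i, j⟩
      · simp [padd, nsp, xi]
      · simp only [padd, nsp, xi]
        split_ifs <;> simp_all

theorem std_mcomp {f g : Brandt n → Brandt n} (hf : Std n f) (hg : Std n g) :
    Std n (mcomp f g) := by
  rcases hg with ⟨b, rfl⟩ | ⟨k', l', p', q', rfl⟩ | ⟨p', q', σ', rfl⟩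
  · exact Or.inl ⟨b, rfl⟩
  · rcases hf with ⟨a, rfl⟩ | ⟨k, l, p, q, rfl⟩ | ⟨p, q, σ, rfl⟩
    · exact Or.inl ⟨sis k' l' p' q' a, rfl⟩
    -- sis ∘ sis
    · by_cases h : p = k' ∧ q = l'
      · obtain ⟨rfl, rfl⟩ := h
        refine Or.inr (Or.inl ⟨k, l, p', q', funext fun x => ?_⟩)
        rcases x with _ | ⟨i, j⟩
        · simp [mcomp, sis]
        · simp only [mcomp, sis]
          split_ifs <;> simp_all
      · refine Or.inl ⟨none, funext fun x => ?_⟩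
        rcases x with _ | ⟨i, j⟩
        · simp [mcomp, sis, xi]
        · simp only [mcomp, sis, xi]
          split_ifs <;> simp_all
    -- nsp ∘ sis
    · by_cases hq : q = l'
      · subst hq
        refine Or.inr (Or.inl ⟨σ.symm k', p, p', q', funext fun x => ?_⟩)
        rcases x with _ | ⟨i, j⟩
        · simp [mcomp, nsp, sis]
        · simp only [mcomp, nsp, sis]
          by_cases hj : j = p
          · subst hj
            rcases eq_or_ne i (σ.symm k') with rfl | hi
            · simp [Equiv.apply_symm_apply]
            · have h2 : σ i ≠ k' := fun h => hi (by rw [← h, Equiv.symm_apply_apply])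
              simp [hi, h2]
          · simp [hj]
      · refine Or.inl ⟨none, funext fun x => ?_⟩
        rcases x with _ | ⟨i, j⟩
        · simp [mcomp, nsp, sis, xi]
        · simp only [mcomp, nsp, sis, xi]
          split_ifs <;> simp_all
  · rcases hf with ⟨a, rfl⟩ | ⟨k, l, p, q, rfl⟩ | ⟨p, q, σ, rfl⟩
    · exact Or.inl ⟨nsp p' q' σ' a, rfl⟩
    -- sis ∘ nsp
    · by_cases hq : q = p'
      · subst hq
        refine Or.inr (Or.inl ⟨k, l, σ' p, q', funext fun x => ?_⟩)
        rcases x with _ | ⟨i, j⟩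
        · simp [mcomp, sis, nsp]
        · simp only [mcomp, sis]
          split_ifs <;> simp [nsp]
      · refine Or.inl ⟨none, funext fun x => ?_⟩
        rcases x with _ | ⟨i, j⟩
        · simp [mcomp, sis, nsp, xi]
        · simp only [mcomp, sis, xi]
          split_ifs <;> simp [nsp, hq]
    -- nsp ∘ nsp
    · by_cases hq : q = p'
      · subst hq
        refine Or.inr (Or.inr ⟨p, q', σ.trans σ', funext fun x => ?_⟩)
        rcases x with _ | ⟨i, j⟩
        · simp [mcomp, nsp]
        · simp only [mcomp, nsp]
          by_cases hj : j = p
          · subst hj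
            simp [nsp]
          · simp [nsp, hj]
      · refine Or.inl ⟨none, funext fun x => ?_⟩
        rcases x with _ | ⟨i, j⟩
        · simp [mcomp, nsp, xi]
        · simp only [mcomp, nsp, xi]
          split_ifs <;> simp [nsp, hq]

theorem isAffine_nsp (p q : Fin n) (σ : Equiv.Perm (Fin n)) : IsAffine (nsp p q σ) := by
  refine ⟨fun x => x.map (fun ij => (σ ij.1, σ ij.2)), some (σ p, q), ?_, ?_⟩
  · rintro (_ | ⟨i, j⟩) (_ | ⟨k, l⟩)
    · rfl
    · rfl
    · simp
    · simp only [bAdd_some_some, Option.map_some, apply_ite (Option.map _),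
        Option.map_none, EmbeddingLike.apply_eq_iff_eq]
  · funext x
    rcases x with _ | ⟨i, j⟩
    · rfl
    · simp only [padd, xi, nsp, Option.map_some, bAdd_some_some,
        EmbeddingLike.apply_eq_iff_eq]

theorem ap_xi (c : Brandt n) : AP n (xi c) := by
  rcases c with _ | ⟨p, q⟩
  · refine AP.base ⟨xi none, none, fun a b => rfl, funext fun x => rfl⟩
  · refine AP.base ⟨xi (some (p, p)), some (p, q), fun a b => by simp [xi], ?_⟩
    funext x
    simp [padd, xi]

theorem sis_eq (k l p q : Fin n) :
    sis k l p q = padd (nsp l k (Equiv.swap k p)) (nsp l q 1) := by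
  funext x
  rcases x with _ | ⟨i, j⟩
  · simp [sis, padd, nsp]
  · simp only [sis, padd, nsp, Equiv.Perm.one_apply]
    by_cases hj : j = l
    · subst hj
      rcases eq_or_ne i k with rfl | hi
      · simp [Equiv.swap_apply_left]
      · simp [hi, Ne.symm hi]
    · simp [hj]

theorem ap_std {f : Brandt n → Brandt n} (h : Std n f) : AP n f := by
  rcases h with ⟨c, rfl⟩ | ⟨k, l, p, q, rfl⟩ | ⟨p, q, σ, rfl⟩
  · exact ap_xi c
  · rw [sis_eq]
    exact AP.add (AP.base (isAffine_nsp _ _ _)) (AP.base (isAffine_nsp _ _ _))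
  · exact AP.base (isAffine_nsp p q σ)

end AuxAP

/-- For `n ≥ 2`, a self-map of `B_n` lies in `A⁺(B_n)` iff it is a constant map, a
singleton-support map, or an `n`-support map `(p,q;σ)`. -/
theorem elements_of_AP (n : ℕ) (hn : 2 ≤ n) (f : Brandt n → Brandt n) :
    AP n f ↔
      ((∃ c : Brandt n, f = xi c) ∨
       (∃ k l p q : Fin n, f = sis k l p q) ∨
       (∃ (p q : Fin n) (σ : Equiv.Perm (Fin n)), f = nsp p q σ)) := by
  constructor
  · intro h
    induction h with
    | base hf => exact std_affine hf
    | add _ _ ih1 ih2 => exact std_padd ih1 ih2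
    | comp _ _ ih1 ih2 => exact std_mcomp ih1 ih2
  · exact ap_std
end

section
/- For every integer n ≥ 2, the set A^+(B_n) has exactly (n! + 1)·n² + n⁴ + 1 elements, with the following breakup: n² + 1 constant maps, n⁴ singleton-support maps, and (n!)·n² n-support maps of the form (p,q;σ) with p,q ∈ [n] and σ a permutation of [n]. -/
namespace CardAPAux

variable {n : ℕ}

lemma bAdd_none_left (a : Brandt n) : bAdd none a = none := by
  cases a <;> rfl

lemma bAdd_none_right (a : Brandt n) : bAdd a none = none := by
  cases a with
  | none => rfl
  | some p => cases p; rfl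

lemma bAdd_some (i j k l : Fin n) :
    bAdd (some (i, j)) (some (k, l)) = if j = k then some (i, l) else none := rfl

/-- The generic column map: `(i,p) ↦ (φ i, q)` (when defined), everything else to `ϑ`. -/
def Fm (p q : Fin n) (φ : Fin n → Option (Fin n)) : Brandt n → Brandt n
  | some (i, j) => if j = p then (φ i).map (fun a => (a, q)) else none
  | none => none

lemma Fm_none (p q : Fin n) (φ : Fin n → Option (Fin n)) : Fm p q φ none = none := rfl

lemma Fm_some (p q : Fin n) (φ : Fin n → Option (Fin n)) (i j : Fin n) :
    Fm p q φ (some (i, j)) = if j = p then (φ i).map (fun a => (a, q)) else none := rfl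

/-- Admissible partial maps: empty, singleton, or a permutation. -/
def Good (φ : Fin n → Option (Fin n)) : Prop :=
  (∀ i, φ i = none) ∨
  (∃ k v, ∀ i, φ i = if i = k then some v else none) ∨
  (∃ σ : Equiv.Perm (Fin n), ∀ i, φ i = some (σ i))

lemma good_of_sub (φ : Fin n → Option (Fin n)) (k : Fin n)
    (h : ∀ i, i ≠ k → φ i = none) : Good φ := by
  cases hk : φ k with
  | none =>
    left; intro i
    by_cases hik : i = k
    · rw [hik, hk]
    · exact h i hik
  | some v =>
    right; left
    refine ⟨k, v, fun i => ?_⟩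
    by_cases hik : i = k
    · simp [hik, hk]
    · simp [hik, h i hik]

/-- The set we claim equals `A⁺(B_n)`. -/
def Sset (n : ℕ) : Set (Brandt n → Brandt n) :=
  {f | (∃ c, f = xi c) ∨ ∃ p q φ, Good φ ∧ f = Fm p q φ}

lemma xi_mem (c : Brandt n) : xi c ∈ Sset n := Or.inl ⟨c, rfl⟩

/- ### Closure under pointwise addition -/

lemma padd_xi_xi (c d : Brandt n) : padd (xi c) (xi d) = xi (bAdd c d) := rfl

lemma padd_xi_none_left (f : Brandt n → Brandt n) : padd (xi none) f = xi none := by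
  funext x; exact bAdd_none_left _

lemma padd_xi_none_right (f : Brandt n → Brandt n) : padd f (xi none) = xi none := by
  funext x; exact bAdd_none_right _

lemma padd_xi_Fm (a b : Fin n) (p q : Fin n) (φ : Fin n → Option (Fin n)) :
    padd (xi (some (a, b))) (Fm p q φ) =
      Fm p q (fun i => if φ i = some b then some a else none) := by
  funext x
  match x with
  | none => simp [padd, Fm, bAdd_none_right]
  | some (i, j) =>
    simp only [padd, xi, Fm_some]
    by_cases hj : j = p
    · simp only [hj, if_pos rfl]
      cases hφ : φ i with
      | none => simp [bAdd_none_right]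
      | some v =>
        simp only [Option.map_some, bAdd_some]
        by_cases hv : v = b
        · simp [hv, bAdd_some]
        · have : ¬ b = v := fun h => hv h.symm
          simp [hv, this, bAdd_some]
    · simp [hj, bAdd_none_right]

lemma padd_Fm_xi (a b : Fin n) (p q : Fin n) (φ : Fin n → Option (Fin n)) :
    padd (Fm p q φ) (xi (some (a, b))) =
      if q = a then Fm p b φ else xi none := by
  funext x
  match x with
  | none =>
    by_cases hqa : q = a <;> simp [padd, Fm, xi, hqa, bAdd_none_left]
  | some (i, j) =>
    simp only [padd, xi, Fm_some]
    by_cases hj : j = p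
    · simp only [hj, if_pos rfl]
      cases hφ : φ i with
      | none => by_cases hqa : q = a <;> simp [hqa, bAdd_none_left, Fm_some, hφ, xi]
      | some v =>
        by_cases hqa : q = a <;>
          simp [hqa, bAdd_some, Fm_some, hφ, xi]
    · by_cases hqa : q = a <;> simp [hj, bAdd_none_left, Fm_some, xi, hqa]

lemma padd_Fm_Fm_ne (p q p' q' : Fin n) (φ ψ : Fin n → Option (Fin n)) (hpp : p ≠ p') :
    padd (Fm p q φ) (Fm p' q' ψ) = xi none := by
  funext x
  match x with
  | none => simp [padd, Fm, xi, bAdd_none_left]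
  | some (i, j) =>
    simp only [padd, Fm_some, xi]
    by_cases hj : j = p
    · simp [hj, hpp, bAdd_none_right]
    · simp [hj, bAdd_none_left]

lemma padd_Fm_Fm (p q q' : Fin n) (φ ψ : Fin n → Option (Fin n)) :
    padd (Fm p q φ) (Fm p q' ψ) =
      Fm p q' (fun i => if ψ i = some q then φ i else none) := by
  funext x
  match x with
  | none => simp [padd, Fm, bAdd_none_left]
  | some (i, j) =>
    simp only [padd, Fm_some]
    by_cases hj : j = p
    · simp only [hj, if_pos rfl]
      cases hφ : φ i with
      | none => cases hψ : ψ i <;> simp [bAdd_none_left, hψ]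
      | some a =>
        cases hψ : ψ i with
        | none => simp [bAdd_none_right, hψ]
        | some b =>
          simp only [Option.map_some, bAdd_some, hψ]
          by_cases hb : b = q
          · simp [hb, bAdd_some]
          · have hq : ¬ q = b := fun h => hb h.symm
            simp [hb, hq, bAdd_some]
    · simp [hj, bAdd_none_left]

/- ### Closure under composition -/

lemma mcomp_xi_left (c : Brandt n) (f : Brandt n → Brandt n) :
    mcomp (xi c) f = xi (f c) := rfl

lemma mcomp_xi_right (c : Brandt n) (f : Brandt n → Brandt n) :
    mcomp f (xi c) = xi c := rfl

lemma mcomp_Fm_Fm_ne (p q p' q' : Fin n) (φ ψ : Fin n → Option (Fin n)) (hqp : q ≠ p') :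
    mcomp (Fm p q φ) (Fm p' q' ψ) = xi none := by
  funext x
  match x with
  | none => simp [mcomp, Fm, xi]
  | some (i, j) =>
    simp only [mcomp, Fm_some, xi]
    by_cases hj : j = p
    · simp only [hj, if_pos rfl]
      cases hφ : φ i with
      | none => simp [Fm]
      | some a => simp [Fm_some, hqp]
    · simp [hj, Fm]

lemma mcomp_Fm_Fm (p q q' : Fin n) (φ ψ : Fin n → Option (Fin n)) :
    mcomp (Fm p q φ) (Fm q q' ψ) = Fm p q' (fun i => (φ i).bind ψ) := by
  funext x
  match x with
  | none => simp [mcomp, Fm]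
  | some (i, j) =>
    simp only [mcomp, Fm_some]
    by_cases hj : j = p
    · simp only [hj, if_pos rfl]
      cases hφ : φ i with
      | none => simp [Fm]
      | some a => simp [Fm_some]
    · simp [hj, Fm]

end CardAPAux

namespace CardAPAux

variable {n : ℕ}

lemma good_empty : Good (fun _ : Fin n => (none : Option (Fin n))) := Or.inl fun _ => rfl

lemma good_perm (σ : Equiv.Perm (Fin n)) : Good (fun i => some (σ i)) :=
  Or.inr (Or.inr ⟨σ, fun _ => rfl⟩)

lemma good_add (q : Fin n) (φ ψ : Fin n → Option (Fin n)) (hψ : Good ψ) :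
    Good (fun i => if ψ i = some q then φ i else none) := by
  rcases hψ with h | ⟨k, v, h⟩ | ⟨σ, h⟩
  · left; intro i; simp [h i]
  · apply good_of_sub _ k
    intro i hik
    simp [h i, hik]
  · apply good_of_sub _ (σ.symm q)
    intro i hik
    have : ¬ σ i = q := fun hq => hik (by rw [← hq]; simp)
    simp [h i, this]

lemma good_comp (φ ψ : Fin n → Option (Fin n)) (hφ : Good φ) (hψ : Good ψ) :
    Good (fun i => (φ i).bind ψ) := by
  rcases hφ with h | ⟨k, v, h⟩ | ⟨σ, h⟩
  · left; intro i; simp [h i]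
  · apply good_of_sub _ k
    intro i hik
    simp [h i, hik]
  · rcases hψ with h' | ⟨k, v, h'⟩ | ⟨τ, h'⟩
    · left; intro i; simp [h i, h' _]
    · apply good_of_sub _ (σ.symm k)
      intro i hik
      have : ¬ σ i = k := fun hq => hik (by rw [← hq]; simp)
      simp [h i, h' _, this]
    · right; right
      exact ⟨σ.trans τ, fun i => by simp [h i, h' _]⟩

lemma good_shift (b : Fin n) (a : Fin n) (φ : Fin n → Option (Fin n)) (hφ : Good φ) :
    Good (fun i => if φ i = some b then some a else none) := by
  rcases hφ with h | ⟨k, v, h⟩ | ⟨σ, h⟩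
  · left; intro i; simp [h i]
  · apply good_of_sub _ k
    intro i hik
    simp [h i, hik]
  · apply good_of_sub _ (σ.symm b)
    intro i hik
    have : ¬ σ i = b := fun hq => hik (by rw [← hq]; simp)
    simp [h i, this]

lemma padd_mem {f g : Brandt n → Brandt n} (hf : f ∈ Sset n) (hg : g ∈ Sset n) :
    padd f g ∈ Sset n := by
  rcases hf with ⟨c, rfl⟩ | ⟨p, q, φ, hφ, rfl⟩
  · rcases hg with ⟨d, rfl⟩ | ⟨p, q, φ, hφ, rfl⟩
    · rw [padd_xi_xi]; exact xi_mem _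
    · cases c with
      | none => rw [padd_xi_none_left]; exact xi_mem _
      | some ab =>
        obtain ⟨a, b⟩ := ab
        rw [padd_xi_Fm]
        exact Or.inr ⟨p, q, _, good_shift b a φ hφ, rfl⟩
  · rcases hg with ⟨d, rfl⟩ | ⟨p', q', ψ, hψ, rfl⟩
    · cases d with
      | none => rw [padd_xi_none_right]; exact xi_mem _
      | some ab =>
        obtain ⟨a, b⟩ := ab
        rw [padd_Fm_xi]
        by_cases hqa : q = a
        · rw [if_pos hqa]; exact Or.inr ⟨p, b, φ, hφ, rfl⟩
        · rw [if_neg hqa]; exact xi_mem _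
    · by_cases hpp : p = p'
      · subst hpp
        rw [padd_Fm_Fm]
        exact Or.inr ⟨p, q', _, good_add q φ ψ hψ, rfl⟩
      · rw [padd_Fm_Fm_ne _ _ _ _ _ _ hpp]; exact xi_mem _

lemma mcomp_mem {f g : Brandt n → Brandt n} (hf : f ∈ Sset n) (hg : g ∈ Sset n) :
    mcomp f g ∈ Sset n := by
  rcases hf with ⟨c, rfl⟩ | ⟨p, q, φ, hφ, rfl⟩
  · rw [mcomp_xi_left]; exact xi_mem _
  · rcases hg with ⟨d, rfl⟩ | ⟨p', q', ψ, hψ, rfl⟩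
    · rw [mcomp_xi_right]; exact xi_mem _
    · by_cases hqp : q = p'
      · subst hqp
        rw [mcomp_Fm_Fm]
        exact Or.inr ⟨p, q', _, good_comp φ ψ hφ hψ, rfl⟩
      · rw [mcomp_Fm_Fm_ne _ _ _ _ _ _ hqp]; exact xi_mem _

end CardAPAux

namespace CardAPAux

variable {n : ℕ}

/-- The endomorphism induced by a permutation. -/
def gperm (σ : Equiv.Perm (Fin n)) : Brandt n → Brandt n :=
  fun x => x.map fun ij => (σ ij.1, σ ij.2)

lemma gperm_endo (σ : Equiv.Perm (Fin n)) :
    ∀ a b : Brandt n, gperm σ (bAdd a b) = bAdd (gperm σ a) (gperm σ b) := by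
  intro a b
  match a, b with
  | none, b => simp [gperm, bAdd_none_left]
  | some (i, j), none => simp [gperm, bAdd_none_right]
  | some (i, j), some (k, l) =>
    simp only [gperm, bAdd_some, Option.map_some]
    by_cases h : j = k
    · simp [h, bAdd_some]
    · have : ¬ σ j = σ k := fun hh => h (σ.injective hh)
      simp [h, this, bAdd_some]

lemma endo_classify (hn : 2 ≤ n) (g : Brandt n → Brandt n)
    (hg : ∀ a b, g (bAdd a b) = bAdd (g a) (g b)) :
    (∃ c, g = xi c) ∨ (∃ σ : Equiv.Perm (Fin n), g = gperm σ) := by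
  have hzz : g none = bAdd (g none) (g none) := by
    have := hg none none
    rwa [bAdd_none_left] at this
  have key : ∀ i j k : Fin n, g (some (i, k)) = bAdd (g (some (i, j))) (g (some (j, k))) := by
    intro i j k
    have := hg (some (i, j)) (some (j, k))
    rwa [bAdd_some, if_pos rfl] at this
  have keyz : ∀ i j : Fin n, i ≠ j → g none = bAdd (g (some (i, j))) (g (some (i, j))) := by
    intro i j hij
    have := hg (some (i, j)) (some (i, j))
    rwa [bAdd_some, if_neg (fun h => hij h.symm)] at this
  cases h0 : g none with
  | some ab =>
    obtain ⟨a, b⟩ := ab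
    have hba : b = a := by
      rw [h0, bAdd_some] at hzz
      by_cases h : b = a
      · exact h
      · rw [if_neg h] at hzz; exact absurd hzz (by simp)
    subst hba
    have hoff : ∀ i j : Fin n, i ≠ j → g (some (i, j)) = some (b, b) := by
      intro i j hij
      have h1 := keyz i j hij
      rw [h0] at h1
      cases hx : g (some (i, j)) with
      | none => rw [hx, bAdd_none_left] at h1; exact absurd h1 (by simp)
      | some xy =>
        obtain ⟨x, y⟩ := xy
        rw [hx, bAdd_some] at h1
        by_cases hyx : y = x
        · rw [if_pos hyx] at h1
          have h2 : x = b ∧ y = b := by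
            have := h1.symm
            simp only [Option.some.injEq, Prod.mk.injEq] at this
            exact this
          rw [h2.1, h2.2]
        · rw [if_neg hyx] at h1; exact absurd h1 (by simp)
    have hdiag : ∀ i : Fin n, g (some (i, i)) = some (b, b) := by
      intro i
      obtain ⟨m, hm⟩ := Fintype.exists_ne_of_one_lt_card (by simp only [Fintype.card_fin]; omega) i
      have h2 := key i m i
      rw [hoff i m (fun h => hm h.symm), hoff m i hm, bAdd_some, if_pos rfl] at h2
      exact h2
    left
    refine ⟨some (b, b), funext fun x => ?_⟩
    match x with
    | none => exact h0
    | some (i, j) =>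
      by_cases hij : i = j
      · subst hij; exact hdiag i
      · exact hoff i j hij
  | none =>
    by_cases hz : ∀ x : Brandt n, g x = none
    · left; exact ⟨none, funext fun x => hz x⟩
    · push_neg at hz
      obtain ⟨x₀, hx₀⟩ := hz
      have stepL : ∀ i j : Fin n, g (some (i, j)) ≠ none → g (some (i, i)) ≠ none := by
        intro i j h hii
        have hk := key i i j
        rw [hii, bAdd_none_left] at hk
        exact h hk
      have stepR : ∀ i j : Fin n, g (some (i, j)) ≠ none → g (some (j, j)) ≠ none := by
        intro i j h hjj
        have hk := key i j j
        rw [hjj, bAdd_none_right] at hk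
        exact h hk
      obtain ⟨i₀, j₀, hx₀'⟩ : ∃ i j : Fin n, g (some (i, j)) ≠ none := by
        match x₀ with
        | none => exact absurd h0 hx₀
        | some (i, j) => exact ⟨i, j, hx₀⟩
      have hii₀ : g (some (i₀, i₀)) ≠ none := stepL _ _ hx₀'
      have hdiag_ne : ∀ k : Fin n, g (some (k, k)) ≠ none := by
        intro k
        by_cases hk : k = i₀
        · subst hk; exact hii₀
        · have hk2 := key i₀ k i₀
          have h3 : g (some (i₀, k)) ≠ none := by
            intro hnone
            rw [hnone, bAdd_none_left] at hk2
            exact hii₀ hk2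
          exact stepR _ _ h3
      have hdiag_idem : ∀ k : Fin n, ∃ a : Fin n, g (some (k, k)) = some (a, a) := by
        intro k
        have hk := key k k k
        cases hx : g (some (k, k)) with
        | none => exact absurd hx (hdiag_ne k)
        | some xy =>
          obtain ⟨x, y⟩ := xy
          rw [hx, bAdd_some] at hk
          by_cases hyx : y = x
          · subst hyx; exact ⟨y, rfl⟩
          · rw [if_neg hyx] at hk; exact absurd hk (by simp)
      choose τ hτ using hdiag_idem
      have hall : ∀ i j : Fin n, g (some (i, j)) = some (τ i, τ j) := by
        intro i j
        by_cases hij : i = j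
        · subst hij; exact hτ i
        · have hne : g (some (i, j)) ≠ none := by
            intro hnone
            have hk := key i j i
            rw [hnone, bAdd_none_left] at hk
            exact hdiag_ne i hk
          cases hx : g (some (i, j)) with
          | none => exact absurd hx hne
          | some xy =>
            obtain ⟨x, y⟩ := xy
            have h1 := key i i j
            rw [hx, hτ i, bAdd_some] at h1
            have h2 := key i j j
            rw [hx, hτ j, bAdd_some] at h2
            by_cases hx1 : τ i = x
            · by_cases hy1 : y = τ j
              · rw [hx1, hy1]
              · rw [if_neg hy1] at h2; exact absurd h2 (by simp)
            · rw [if_neg hx1] at h1; exact absurd h1 (by simp)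
      have hinj : Function.Injective τ := by
        intro i j hij
        by_contra hne
        have h1 := keyz i j hne
        rw [h0, hall, bAdd_some, hij, if_pos rfl] at h1
        exact absurd h1 (by simp)
      right
      refine ⟨Equiv.ofBijective τ (Finite.injective_iff_bijective.mp hinj),
        funext fun x => ?_⟩
      match x with
      | none => exact h0
      | some (i, j) => exact hall i j

end CardAPAux

namespace CardAPAux

variable {n : ℕ}

lemma padd_gperm_xi (σ : Equiv.Perm (Fin n)) (p q : Fin n) :
    padd (gperm σ) (xi (some (p, q))) = Fm (σ.symm p) q (fun i => some (σ i)) := by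
  funext x
  match x with
  | none => simp [padd, gperm, xi, Fm, bAdd_none_left]
  | some (i, j) =>
    simp only [padd, gperm, xi, Option.map_some, Fm_some, bAdd_some]
    by_cases h : σ j = p
    · have h2 : j = σ.symm p := by rw [← h]; simp
      simp [h, h2]
    · have h2 : ¬ j = σ.symm p := fun hh => h (by rw [hh]; simp)
      simp [h, h2]

lemma affine_mem {f : Brandt n → Brandt n} (hn : 2 ≤ n) (hf : IsAffine f) :
    f ∈ Sset n := by
  obtain ⟨g, c, hg, rfl⟩ := hf
  rcases endo_classify hn g hg with ⟨d, rfl⟩ | ⟨σ, rfl⟩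
  · rw [padd_xi_xi]; exact xi_mem _
  · cases c with
    | none =>
      have : padd (gperm σ) (xi none) = xi none := padd_xi_none_right _
      rw [this]; exact xi_mem _
    | some pq =>
      obtain ⟨p, q⟩ := pq
      rw [padd_gperm_xi]
      exact Or.inr ⟨σ.symm p, q, _, good_perm σ, rfl⟩

/- ### Every element of `Sset` is in `AP` -/

lemma xi_affine (c : Brandt n) : IsAffine (xi c : Brandt n → Brandt n) := by
  cases c with
  | none =>
    refine ⟨xi none, none, fun a b => by simp [xi, bAdd_none_left], ?_⟩
    funext x; simp [padd, xi, bAdd_none_left]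
  | some ab =>
    obtain ⟨a, b⟩ := ab
    refine ⟨xi (some (a, a)), some (a, b), fun u v => by simp [xi, bAdd_some], ?_⟩
    funext x; simp [padd, xi, bAdd_some]

lemma Fm_perm_affine (p q : Fin n) (σ : Equiv.Perm (Fin n)) :
    IsAffine (Fm p q (fun i => some (σ i))) := by
  refine ⟨gperm σ, some (σ p, q), gperm_endo σ, ?_⟩
  rw [padd_gperm_xi]
  simp

lemma Fm_empty_eq (p q : Fin n) : Fm p q (fun _ => (none : Option (Fin n))) = xi none := by
  funext x
  match x with
  | none => rfl
  | some (i, j) => simp [Fm_some, xi]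

lemma Fm_singleton_eq (p q k v : Fin n) :
    Fm p q (fun i => if i = k then some v else none) =
      padd (Fm p k (fun i => some (Equiv.swap k v i))) (Fm p q (fun i => some i)) := by
  have hfun : (fun i : Fin n => if (some i : Option (Fin n)) = some k
        then some (Equiv.swap k v i) else (none : Option (Fin n)))
      = fun i => if i = k then some v else none := by
    funext i
    by_cases hik : i = k
    · subst hik; simp [Equiv.swap_apply_left]
    · simp [hik]
  rw [padd_Fm_Fm, hfun]

lemma sset_AP {f : Brandt n → Brandt n} (hf : f ∈ Sset n) : AP n f := by
  rcases hf with ⟨c, rfl⟩ | ⟨p, q, φ, hφ, rfl⟩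
  · exact AP.base (xi_affine c)
  · rcases hφ with h | ⟨k, v, h⟩ | ⟨σ, h⟩
    · have : φ = fun _ => none := funext h
      rw [this, Fm_empty_eq]
      exact AP.base (xi_affine none)
    · have : φ = fun i => if i = k then some v else none := funext h
      rw [this, Fm_singleton_eq]
      exact AP.add (AP.base (Fm_perm_affine p k (Equiv.swap k v)))
        (AP.base (by simpa using Fm_perm_affine p q (Equiv.refl (Fin n))))
    · have : φ = fun i => some (σ i) := funext h
      rw [this]
      exact AP.base (Fm_perm_affine p q σ)

lemma AP_iff_sset (hn : 2 ≤ n) (f : Brandt n → Brandt n) :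
    AP n f ↔ f ∈ Sset n := by
  constructor
  · intro h
    induction h with
    | base hf => exact affine_mem hn hf
    | add _ _ ih1 ih2 => exact padd_mem ih1 ih2
    | comp _ _ ih1 ih2 => exact mcomp_mem ih1 ih2
  · exact sset_AP

end CardAPAux

namespace CardAPAux

variable {n : ℕ}

lemma sis_eq_Fm (k l p q : Fin n) :
    sis k l p q = Fm l q (fun i => if i = k then some p else none) := by
  funext x
  match x with
  | none => simp [sis, Fm]
  | some (i, j) =>
    simp only [sis, Fm_some, Option.some.injEq, Prod.mk.injEq]
    by_cases hj : j = l
    · subst hj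
      by_cases hik : i = k
      · subst hik; simp
      · simp [hik]
    · simp [hj, fun h : i = k ∧ j = l => hj h.2]

lemma nsp_eq_Fm (p q : Fin n) (σ : Equiv.Perm (Fin n)) :
    nsp p q σ = Fm p q (fun i => some (σ i)) := by
  funext x
  match x with
  | none => rfl
  | some (i, j) => simp [nsp, Fm_some]

/-- The three families, as ranges. -/
def Cs (n : ℕ) : Set (Brandt n → Brandt n) := Set.range (xi : Brandt n → _)

def Sis (n : ℕ) : Set (Brandt n → Brandt n) :=
  Set.range (fun t : (Fin n × Fin n) × Fin n × Fin n => sis t.1.1 t.1.2 t.2.1 t.2.2)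

def Ns (n : ℕ) : Set (Brandt n → Brandt n) :=
  Set.range (fun t : (Fin n × Fin n) × Equiv.Perm (Fin n) => nsp t.1.1 t.1.2 t.2)

lemma AP_set_eq (hn : 2 ≤ n) :
    {f : Brandt n → Brandt n | AP n f} = Cs n ∪ Sis n ∪ Ns n := by
  ext f
  simp only [Set.mem_setOf_eq, Set.mem_union, Cs, Sis, Ns, Set.mem_range, Prod.exists]
  constructor
  · intro h
    rcases (AP_iff_sset hn f).mp h with ⟨c, rfl⟩ | ⟨p, q, φ, hφ, rfl⟩
    · exact Or.inl (Or.inl ⟨c, rfl⟩)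
    · rcases hφ with he | ⟨k, v, hs⟩ | ⟨σ, hp⟩
      · have : φ = fun _ => none := funext he
        rw [this, Fm_empty_eq]
        exact Or.inl (Or.inl ⟨none, rfl⟩)
      · have : φ = fun i => if i = k then some v else none := funext hs
        rw [this]
        exact Or.inl (Or.inr ⟨k, p, v, q, sis_eq_Fm k p v q⟩)
      · have : φ = fun i => some (σ i) := funext hp
        rw [this]
        exact Or.inr ⟨p, q, σ, nsp_eq_Fm p q σ⟩
  · intro h
    apply sset_AP
    rcases h with (⟨c, rfl⟩ | ⟨k, l, p, q, rfl⟩) | ⟨p, q, σ, rfl⟩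
    · exact xi_mem c
    · rw [sis_eq_Fm]
      exact Or.inr ⟨l, q, _, Or.inr (Or.inl ⟨k, p, fun _ => rfl⟩), rfl⟩
    · rw [nsp_eq_Fm]
      exact Or.inr ⟨p, q, _, good_perm σ, rfl⟩

lemma xi_injective : Function.Injective (xi : Brandt n → (Brandt n → Brandt n)) := by
  intro c d h
  exact congrFun h none

lemma sis_injective :
    Function.Injective
      (fun t : (Fin n × Fin n) × Fin n × Fin n => sis t.1.1 t.1.2 t.2.1 t.2.2) := by
  rintro ⟨⟨k, l⟩, p, q⟩ ⟨⟨k', l'⟩, p', q'⟩ h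
  have h1 := congrFun h (some (k, l))
  simp only [sis] at h1
  simp only [if_true] at h1
  by_cases hkl : (some (k, l) : Brandt n) = some (k', l')
  · rw [if_pos hkl] at h1
    simp only [Option.some.injEq, Prod.mk.injEq] at h1 hkl
    simp [hkl.1, hkl.2, h1.1, h1.2]
  · rw [if_neg hkl] at h1
    exact absurd h1 (by simp)

lemma nsp_injective (hn : 2 ≤ n) :
    Function.Injective
      (fun t : (Fin n × Fin n) × Equiv.Perm (Fin n) => nsp t.1.1 t.1.2 t.2) := by
  have : NeZero n := ⟨by omega⟩
  rintro ⟨⟨p, q⟩, σ⟩ ⟨⟨p', q'⟩, τ⟩ h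
  have hp : p = p' := by
    have h1 := congrFun h (some (0, p))
    simp only [nsp] at h1
    simp only [if_true] at h1
    by_cases hpp : p = p'
    · exact hpp
    · rw [if_neg hpp] at h1; exact absurd h1 (by simp)
  subst hp
  have hq : ∀ i : Fin n, σ i = τ i ∧ q = q' := by
    intro i
    have h1 := congrFun h (some (i, p))
    simp only [nsp] at h1
    simp only [if_true] at h1
    simpa [Prod.ext_iff] using h1
  have hσ : σ = τ := Equiv.ext fun i => (hq i).1
  simp [hσ, (hq 0).2]

lemma two_elems (hn : 2 ≤ n) :
    ∃ i j : Fin n, i ≠ j := by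
  refine ⟨⟨0, by omega⟩, ⟨1, by omega⟩, ?_⟩
  intro h
  have := Fin.mk.injEq 0 (by omega : 0 < n) 1 (by omega) ▸ h
  simp [Fin.ext_iff] at h

lemma disj_C_Si : Disjoint (Cs n) (Sis n) := by
  rw [Set.disjoint_left]
  rintro f ⟨c, rfl⟩ ⟨⟨⟨k, l⟩, p, q⟩, hf⟩
  have h1 := congrFun hf none
  have h2 := congrFun hf (some (k, l))
  simp only [sis, xi] at h1 h2
  rw [if_neg (by simp)] at h1
  simp only [if_true] at h2
  rw [← h1] at h2
  exact absurd h2 (by simp)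

lemma disj_C_N (hn : 2 ≤ n) : Disjoint (Cs n) (Ns n) := by
  have : NeZero n := ⟨by omega⟩
  rw [Set.disjoint_left]
  rintro f ⟨c, rfl⟩ ⟨⟨⟨p, q⟩, σ⟩, hf⟩
  have h1 := congrFun hf none
  have h2 := congrFun hf (some (0, p))
  simp only [nsp, xi] at h1 h2
  simp only [if_true] at h2
  rw [← h1] at h2
  exact absurd h2 (by simp)

lemma disj_Si_N (hn : 2 ≤ n) : Disjoint (Sis n) (Ns n) := by
  rw [Set.disjoint_left]
  rintro f ⟨⟨⟨k, l⟩, p, q⟩, hf⟩ ⟨⟨⟨p', q'⟩, σ⟩, hg⟩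
  obtain ⟨i, j, hij⟩ := two_elems hn
  have h1 := congrFun hg (some (i, p'))
  have h2 := congrFun hg (some (j, p'))
  rw [← hf] at h1 h2
  simp only [nsp, sis] at h1 h2
  simp only [if_true] at h1 h2
  by_cases hi : (some (i, p') : Brandt n) = some (k, l)
  · by_cases hj : (some (j, p') : Brandt n) = some (k, l)
    · rw [← hj] at hi
      simp only [Option.some.injEq, Prod.mk.injEq] at hi
      exact hij hi.1
    · rw [if_neg hj] at h2; exact absurd h2 (by simp)
  · rw [if_neg hi] at h1; exact absurd h1 (by simp)

end CardAPAux

namespace CardAPAux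

variable {n : ℕ}

lemma AP_xi (c : Brandt n) : AP n (xi c) := sset_AP (xi_mem c)

lemma AP_sis (k l p q : Fin n) : AP n (sis k l p q) := by
  apply sset_AP
  rw [sis_eq_Fm]
  exact Or.inr ⟨l, q, _, Or.inr (Or.inl ⟨k, p, fun _ => rfl⟩), rfl⟩

lemma AP_nsp (p q : Fin n) (σ : Equiv.Perm (Fin n)) : AP n (nsp p q σ) := by
  apply sset_AP
  rw [nsp_eq_Fm]
  exact Or.inr ⟨p, q, _, good_perm σ, rfl⟩

lemma ncard_C : (Cs n).ncard = n ^ 2 + 1 := by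
  rw [Cs, ← Set.image_univ, Set.ncard_image_of_injective _ xi_injective, Set.ncard_univ]
  simp only [Nat.card_eq_fintype_card, Fintype.card_option, Fintype.card_prod,
    Fintype.card_fin]
  ring

lemma ncard_Si : (Sis n).ncard = n ^ 4 := by
  rw [Sis, ← Set.image_univ, Set.ncard_image_of_injective _ sis_injective, Set.ncard_univ]
  simp only [Nat.card_eq_fintype_card, Fintype.card_prod, Fintype.card_fin]
  ring

lemma ncard_N (hn : 2 ≤ n) : (Ns n).ncard = Nat.factorial n * n ^ 2 := by
  rw [Ns, ← Set.image_univ, Set.ncard_image_of_injective _ (nsp_injective hn),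
    Set.ncard_univ]
  simp only [Nat.card_eq_fintype_card, Fintype.card_prod, Fintype.card_perm,
    Fintype.card_fin]
  ring

lemma setC_eq : {f : Brandt n → Brandt n | AP n f ∧ ∃ c : Brandt n, f = xi c} = Cs n := by
  ext f
  constructor
  · rintro ⟨-, c, rfl⟩; exact ⟨c, rfl⟩
  · rintro ⟨c, rfl⟩; exact ⟨AP_xi c, c, rfl⟩

lemma setSi_eq :
    {f : Brandt n → Brandt n | AP n f ∧ ∃ k l p q : Fin n, f = sis k l p q} = Sis n := by
  ext f
  constructor
  · rintro ⟨-, k, l, p, q, rfl⟩; exact ⟨((k, l), p, q), rfl⟩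
  · rintro ⟨⟨⟨k, l⟩, p, q⟩, rfl⟩; exact ⟨AP_sis k l p q, k, l, p, q, rfl⟩

lemma setN_eq :
    {f : Brandt n → Brandt n |
      AP n f ∧ ∃ (p q : Fin n) (σ : Equiv.Perm (Fin n)), f = nsp p q σ} = Ns n := by
  ext f
  constructor
  · rintro ⟨-, p, q, σ, rfl⟩; exact ⟨((p, q), σ), rfl⟩
  · rintro ⟨⟨⟨p, q⟩, σ⟩, rfl⟩; exact ⟨AP_nsp p q σ, p, q, σ, rfl⟩

end CardAPAux

open CardAPAux in
/-- For `n ≥ 2`, `A⁺(B_n)` has exactly `(n! + 1)·n² + n⁴ + 1` elements: `n² + 1` constant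
maps, `n⁴` singleton-support maps, and `(n!)·n²` `n`-support maps `(p,q;σ)`. -/
theorem card_AP (n : ℕ) (hn : 2 ≤ n) :
    Set.ncard {f : Brandt n → Brandt n | AP n f}
        = (Nat.factorial n + 1) * n ^ 2 + n ^ 4 + 1 ∧
    Set.ncard {f : Brandt n → Brandt n | AP n f ∧ ∃ c : Brandt n, f = xi c} = n ^ 2 + 1 ∧
    Set.ncard {f : Brandt n → Brandt n | AP n f ∧ ∃ k l p q : Fin n, f = sis k l p q}
        = n ^ 4 ∧
    Set.ncard {f : Brandt n → Brandt n |
        AP n f ∧ ∃ (p q : Fin n) (σ : Equiv.Perm (Fin n)), f = nsp p q σ}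
        = Nat.factorial n * n ^ 2 := by
  classical
  have hdisjU : Disjoint (Cs n ∪ Sis n) (Ns n) :=
    Set.disjoint_union_left.mpr ⟨disj_C_N hn, disj_Si_N hn⟩
  refine ⟨?_, ?_, ?_, ?_⟩
  · rw [AP_set_eq hn,
      Set.ncard_union_eq hdisjU (Set.toFinite _) (Set.toFinite _),
      Set.ncard_union_eq disj_C_Si (Set.toFinite _) (Set.toFinite _),
      ncard_C, ncard_Si, ncard_N hn]
    ring
  · rw [setC_eq, ncard_C]
  · rw [setSi_eq, ncard_Si]
  · rw [setN_eq, ncard_N hn]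
end

section
/- Every element of A^+(B_1) is idempotent with respect to both operations: for all f ∈ A^+(B_1), f + f = f and f ∘ f = f. Consequently both semigroup reducts (A^+(B_1),+) and (A^+(B_1),∘) are aperiodic. -/

lemma brandt1_cases (x : Brandt 1) : x = none ∨ x = some (0, 0) := by
  match x with
  | none => exact Or.inl rfl
  | some (i, j) => right; congr 1 <;> exact Subsingleton.elim _ _

lemma key_AP (f : Brandt 1 → Brandt 1) (hf : AP 1 f) :
    f = id ∨ f = xi (some (0, 0)) ∨ f = xi (none : Brandt 1) := by
  induction hf with
  | base h =>
    obtain ⟨g, c, hg, rfl⟩ := h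
    have hbn : ∀ a : Brandt 1, bAdd a none = none := by
      intro a; match a with
      | none => rfl
      | some (i, j) => rfl
    rcases brandt1_cases c with rfl | rfl
    · right; right
      funext x
      simp only [padd, xi, hbn]
    · -- f x = bAdd (g x) e = g x
      have hfg : padd g (xi (some (0,0))) = g := by
        funext x
        rcases brandt1_cases (g x) with h | h <;>
          simp only [padd, xi, h] <;> rfl
      rw [hfg]
      rcases brandt1_cases (g none) with h0 | h0
      · rcases brandt1_cases (g (some (0,0))) with h1 | h1
        · right; right; funext x
          rcases brandt1_cases x with rfl | rfl
          · exact h0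
          · exact h1
        · left; funext x
          rcases brandt1_cases x with rfl | rfl
          · exact h0
          · exact h1
      · -- g none = e forces g e = e
        have := hg (some (0,0)) none
        have hbe : bAdd (some ((0:Fin 1), (0:Fin 1))) none = none := rfl
        rw [hbe, h0] at this
        rcases brandt1_cases (g (some (0,0))) with h1 | h1
        · rw [h1] at this; exact absurd this (by decide)
        · right; left; funext x
          rcases brandt1_cases x with rfl | rfl
          · exact h0
          · exact h1
  | add _ _ ih1 ih2 =>
    rcases ih1 with rfl | rfl | rfl <;> rcases ih2 with rfl | rfl | rfl <;>
      first
        | (left; decide)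
        | (right; left; decide)
        | (right; right; decide)
  | comp _ _ ih1 ih2 =>
    rcases ih1 with rfl | rfl | rfl <;> rcases ih2 with rfl | rfl | rfl <;>
      first
        | (left; decide)
        | (right; left; decide)
        | (right; right; decide)

/-- Every element of `A⁺(B_1)` is idempotent for both operations; consequently both semigroup
reducts `(A⁺(B_1),+)` and `(A⁺(B_1),∘)` are aperiodic (some power satisfies
`f^(m+1) = f^m` uniformly, where `addPow f k` and `compPow f k` denote `(k+1)`-fold powers). -/
theorem AP_one_idempotent_aperiodic :
    (∀ f : Brandt 1 → Brandt 1, AP 1 f → padd f f = f ∧ mcomp f f = f) ∧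
    (∃ m : ℕ, ∀ f : Brandt 1 → Brandt 1, AP 1 f →
      addPow f (m + 1) = addPow f m ∧ compPow f (m + 1) = compPow f m) := by
  have main : ∀ f : Brandt 1 → Brandt 1, AP 1 f → padd f f = f ∧ mcomp f f = f := by
    intro f hf
    rcases key_AP f hf with rfl | rfl | rfl <;> exact ⟨by decide, by decide⟩
  refine ⟨main, 0, fun f hf => ?_⟩
  obtain ⟨h1, h2⟩ := main f hf
  exact ⟨h1, h2⟩
end

section
/- Let Σ = {a,b,c} be a three-letter alphabet and let L_a = {x a b^n : x ∈ Σ*, n ≥ 0} = Σ*·{a}·{b}*, the set of words over Σ ending in an a followed only by b's. Then the syntactic monoid Σ*/≈_{L_a} of L_a is isomorphic as a monoid to (A^+(B_1), ∘). -/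
/-- The language `L_a = Σ*·{a}·{b}*` over `Σ = {a,b,c}` (encoded as `Fin 3` with `a = 0`,
`b = 1`, `c = 2`): words ending in an `a` followed only by `b`'s. -/
def La : Set (List (Fin 3)) :=
  {x | ∃ (w : List (Fin 3)) (k : ℕ), x = w ++ [0] ++ List.replicate k 1}

/-- The three possible values of maps in `A⁺(B_1)`. -/
def Good (f : Brandt 1 → Brandt 1) : Prop :=
  f = id ∨ f = xi (some (0, 0)) ∨ f = xi none

instance : DecidablePred Good := fun f => by unfold Good; infer_instance

instance : DecidablePred (IsAffine (n := 1)) := fun f => by unfold IsAffine; infer_instance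

lemma good_affine : ∀ f : Brandt 1 → Brandt 1, IsAffine f → Good f := by decide

lemma affine_good : ∀ f : Brandt 1 → Brandt 1, Good f → IsAffine f := by decide

lemma padd_good : ∀ f g : Brandt 1 → Brandt 1, Good f → Good g → Good (padd f g) := by decide

lemma mcomp_good : ∀ f g : Brandt 1 → Brandt 1, Good f → Good g → Good (mcomp f g) := by decide

lemma good_ext : ∀ f g : Brandt 1 → Brandt 1, Good f → Good g →
    (f none = some (0, 0) ↔ g none = some (0, 0)) →
    (f (some (0, 0)) = some (0, 0) ↔ g (some (0, 0)) = some (0, 0)) → f = g := by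
  intro f g hf hg h1 h2
  rcases hf with rfl | rfl | rfl <;> rcases hg with rfl | rfl | rfl <;>
    first
      | rfl
      | (exfalso; revert h1 h2; decide)

lemma AP_good {f : Brandt 1 → Brandt 1} (h : AP 1 f) : Good f := by
  induction h with
  | base h => exact good_affine _ h
  | add _ _ h1 h2 => exact padd_good _ _ h1 h2
  | comp _ _ h1 h2 => exact mcomp_good _ _ h1 h2

lemma good_AP {f : Brandt 1 → Brandt 1} (h : Good f) : AP 1 f :=
  AP.base (affine_good f h)

/-- The transition map of a single letter. -/
def letf : Fin 3 → (Brandt 1 → Brandt 1)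
  | 0 => xi (some (0, 0))
  | 1 => id
  | 2 => xi none

/-- The transition map of a word. -/
def F (w : List (Fin 3)) : Brandt 1 → Brandt 1 :=
  w.foldl (fun acc a => mcomp acc (letf a)) id

lemma letf_good : ∀ a : Fin 3, Good (letf a) := by decide

lemma foldl_mcomp (y : List (Fin 3)) : ∀ init : Brandt 1 → Brandt 1,
    y.foldl (fun acc a => mcomp acc (letf a)) init = mcomp init (F y) := by
  induction y with
  | nil => intro init; rfl
  | cons a t ih =>
      intro init
      show (t.foldl _ (mcomp init (letf a))) = _
      rw [ih (mcomp init (letf a))]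
      show mcomp (mcomp init (letf a)) (F t) = mcomp init (F (a :: t))
      have : F (a :: t) = mcomp (letf a) (F t) := by
        show (t.foldl _ (mcomp id (letf a))) = _
        rw [ih (mcomp id (letf a))]
        rfl
      rw [this]
      rfl

lemma F_append (x y : List (Fin 3)) : F (x ++ y) = mcomp (F x) (F y) := by
  show (x ++ y).foldl _ id = _
  rw [List.foldl_append, foldl_mcomp]
  rfl

lemma F_good (w : List (Fin 3)) : Good (F w) := by
  induction w using List.reverseRecOn with
  | nil => exact Or.inl rfl
  | append_singleton t a ih =>
      rw [F_append]
      exact mcomp_good _ _ ih (letf_good a)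

lemma F_replicate_one (k : ℕ) : F (List.replicate k 1) = id := by
  induction k with
  | zero => rfl
  | succ n ih =>
      rw [List.replicate_succ', F_append, ih]
      rfl

lemma mem_La_iff (w : List (Fin 3)) : w ∈ La ↔ F w none = some (0, 0) := by
  constructor
  · rintro ⟨u, k, rfl⟩
    rw [F_append, F_append, F_replicate_one]
    rfl
  · induction w using List.reverseRecOn with
    | nil => intro h; exact absurd h (by decide)
    | append_singleton t a ih =>
        rw [F_append]
        fin_cases a
        · intro _
          exact ⟨t, 0, by simp⟩
        · intro h
          have h' : F t none = some (0, 0) := h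
          obtain ⟨u, k, rfl⟩ := ih h'
          exact ⟨u, k + 1, by simp [List.replicate_succ']⟩
        · intro h
          have h' : (none : Brandt 1) = some (0, 0) := h
          exact absurd h' (by decide)

lemma synF (x y : List (Fin 3)) : (synMonSetoid La).r x y ↔ F x = F y := by
  constructor
  · intro h
    have h1 := h [] []
    have h2 := h [0] []
    simp only [List.append_nil, List.nil_append, mem_La_iff] at h1 h2
    rw [F_append] at h2
    have e1 : (mcomp (F [0]) (F x)) none = F x (some (0, 0)) := rfl
    have e2 : (mcomp (F [0]) (F y)) none = F y (some (0, 0)) := rfl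
    rw [F_append, e1, e2] at h2
    exact good_ext _ _ (F_good x) (F_good y) h1 h2
  · intro h u v
    rw [mem_La_iff, mem_La_iff, F_append, F_append, F_append, F_append, h]

/-- The syntactic monoid `Σ*/≈_{L_a}` of `L_a` is isomorphic as a monoid to `(A⁺(B_1), ∘)`:
there is a bijection from the quotient onto `A⁺(B_1)` carrying concatenation of words to
composition of maps (arguments on the left). -/
theorem syntactic_monoid_La :
    ∃ e : Quotient (synMonSetoid La) ≃ {f : Brandt 1 → Brandt 1 // AP 1 f},
      ∀ x y : List (Fin 3),
        (e (Quotient.mk (synMonSetoid La) (x ++ y))).val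
          = mcomp (e (Quotient.mk (synMonSetoid La) x)).val
                  (e (Quotient.mk (synMonSetoid La) y)).val := by
  let toFun : Quotient (synMonSetoid La) → {f : Brandt 1 → Brandt 1 // AP 1 f} :=
    Quotient.lift (fun w => ⟨F w, good_AP (F_good w)⟩)
      (fun a b h => Subtype.ext ((synF a b).mp h))
  have hbij : Function.Bijective toFun := by
    constructor
    · intro q1 q2
      induction q1 using Quotient.ind with | _ x =>
      induction q2 using Quotient.ind with | _ y =>
      intro h
      exact Quotient.sound ((synF x y).mpr (congrArg Subtype.val h))
    · rintro ⟨f, hf⟩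
      rcases AP_good hf with h | h | h
      · exact ⟨Quotient.mk _ [], Subtype.ext h.symm⟩
      · refine ⟨Quotient.mk _ [0], Subtype.ext ?_⟩
        show F [0] = f
        rw [h]; rfl
      · refine ⟨Quotient.mk _ [2], Subtype.ext ?_⟩
        show F [2] = f
        rw [h]; rfl
  refine ⟨Equiv.ofBijective toFun hbij, fun x y => ?_⟩
  show F (x ++ y) = mcomp (F x) (F y)
  exact F_append x y
end

section
/- For n ≥ 2, the set D = {(1,1;id)} ∪ {ξ_{(p,q)} : p,q ∈ [n]} is a disjunctive subset of the semigroup (A^+(B_n), ∘); that is, for all f, g ∈ A^+(B_n), if h ∘ f ∘ h' ∈ D ⇔ h ∘ g ∘ h' ∈ D for all h, h' ∈ A^+(B_n), then f = g. -/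
lemma xi_affine {n : ℕ} (c : Brandt n) : IsAffine (xi c) := by
  rcases c with _ | ⟨p, q⟩
  · exact ⟨xi none, none, fun a b => rfl, rfl⟩
  · refine ⟨xi (some (p, p)), some (p, q), fun a b => by simp [xi, bAdd], ?_⟩
    funext x
    simp [padd, xi, bAdd]

lemma nsp_affine {n : ℕ} (p q : Fin n) (σ : Equiv.Perm (Fin n)) :
    IsAffine (nsp p q σ) := by
  refine ⟨fun x => x.map (fun ij => (σ ij.1, σ ij.2)), some (σ p, q), ?_, ?_⟩
  · rintro (_ | ⟨i, j⟩) (_ | ⟨k, l⟩) <;> simp [bAdd]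
  · funext x
    rcases x with _ | ⟨i, j⟩
    · simp [nsp, padd, xi, bAdd]
    · by_cases hj : j = p
      · subst hj; simp [nsp, padd, xi, bAdd]
      · simp [nsp, padd, xi, bAdd, hj, σ.injective.ne hj]

lemma sis_ap {n : ℕ} (k l p q : Fin n) : AP n (sis k l p q) := by
  have hrw : sis k l p q =
      padd (nsp l k (Equiv.swap k p)) (nsp l q (Equiv.refl (Fin n))) := by
    funext x
    rcases x with _ | ⟨i, j⟩
    · simp [sis, padd, nsp, bAdd]
    · by_cases hj : j = l
      · subst hj
        by_cases hi : i = k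
        · subst hi
          simp [sis, padd, nsp, bAdd, Equiv.swap_apply_left]
        · simp [sis, padd, nsp, bAdd, hi, Ne.symm hi]
      · simp [sis, padd, nsp, bAdd, hj]
  rw [hrw]
  exact AP.add (AP.base (nsp_affine _ _ _)) (AP.base (nsp_affine _ _ _))

/-- For `n ≥ 2`, the set `D = {(1,1;id)} ∪ {ξ_{(p,q)} : p,q}` is a disjunctive subset of
`(A⁺(B_n), ∘)`: if `h f h' ∈ D ↔ h g h' ∈ D` for all `h, h' ∈ A⁺(B_n)`, then `f = g`. -/
theorem D_disjunctive_comp (n : ℕ) (hn : 2 ≤ n)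
    (D : Set (Brandt n → Brandt n))
    (hD : D = {nsp ⟨0, by omega⟩ ⟨0, by omega⟩ (Equiv.refl (Fin n))} ∪
      {f | ∃ p q : Fin n, f = xi (some (p, q))})
    (f g : Brandt n → Brandt n) (hf : AP n f) (hg : AP n g)
    (h : ∀ h₁ h₂ : Brandt n → Brandt n, AP n h₁ → AP n h₂ →
      (mcomp (mcomp h₁ f) h₂ ∈ D ↔ mcomp (mcomp h₁ g) h₂ ∈ D)) :
    f = g := by
  have z0 : Fin n := ⟨0, by omega⟩
  have memD : ∀ c : Brandt n, xi c ∈ D ↔ ∃ p q : Fin n, c = some (p, q) := by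
    intro c
    rw [hD]
    simp only [Set.mem_union, Set.mem_singleton_iff, Set.mem_setOf_eq]
    constructor
    · rintro (hc | ⟨p, q, hpq⟩)
      · exfalso
        have h1 := congrFun hc (some (⟨0, by omega⟩, ⟨0, by omega⟩))
        have h2 := congrFun hc (some (⟨0, by omega⟩, ⟨1, by omega⟩))
        simp [xi, nsp] at h1 h2
        rw [h1] at h2
        simp at h2
      · exact ⟨p, q, congrFun hpq none⟩
    · rintro ⟨p, q, rfl⟩
      exact Or.inr ⟨p, q, rfl⟩
  have key : ∀ x : Brandt n, ∀ h₂ : Brandt n → Brandt n, AP n h₂ →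
      ((∃ p q : Fin n, h₂ (f x) = some (p, q)) ↔
        (∃ p q : Fin n, h₂ (g x) = some (p, q))) := by
    intro x h₂ hh₂
    have hx := h (xi x) h₂ (AP.base (xi_affine x)) hh₂
    have e1 : mcomp (mcomp (xi x) f) h₂ = xi (h₂ (f x)) := rfl
    have e2 : mcomp (mcomp (xi x) g) h₂ = xi (h₂ (g x)) := rfl
    rw [e1, e2] at hx
    exact ((memD _).symm.trans hx).trans (memD _)
  funext x
  rcases hfx : f x with _ | ⟨i, j⟩ <;> rcases hgx : g x with _ | ⟨k, l⟩
  · rfl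
  · exfalso
    have hk := (key x (sis k l ⟨0, by omega⟩ ⟨0, by omega⟩) (sis_ap _ _ _ _)).mpr
      ⟨⟨0, by omega⟩, ⟨0, by omega⟩, by rw [hgx]; simp [sis]⟩
    rw [hfx] at hk
    obtain ⟨p, q, hpq⟩ := hk
    simp [sis] at hpq
  · exfalso
    have hk := (key x (sis i j ⟨0, by omega⟩ ⟨0, by omega⟩) (sis_ap _ _ _ _)).mp
      ⟨⟨0, by omega⟩, ⟨0, by omega⟩, by rw [hfx]; simp [sis]⟩
    rw [hgx] at hk
    obtain ⟨p, q, hpq⟩ := hk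
    simp [sis] at hpq
  · by_cases hij : (i, j) = (k, l)
    · rw [hij]
    · exfalso
      have hk := (key x (sis i j ⟨0, by omega⟩ ⟨0, by omega⟩) (sis_ap _ _ _ _)).mp
        ⟨⟨0, by omega⟩, ⟨0, by omega⟩, by rw [hfx]; simp [sis]⟩
      rw [hgx] at hk
      obtain ⟨p, q, hpq⟩ := hk
      simp [sis] at hpq
      exact hij (by simp [hpq.1.1, hpq.1.2])
end
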